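/- arXiv:2505.19088 — 12 statements merged into one kernel-verified Lean document; each statement's English description precedes it below -/
import Mathlib

section
/- If f, g, h are rational numbers and x is a rational root of the cubic equation x³ - f²x² + g²x - h² = 0, then x is expressible as a sum of two squares of rational numbers. -/
/-!
The cubic says `x * (x ^ 2 + g ^ 2) = (f * x) ^ 2 + h ^ 2`. Dividing one sum of two squares by
another nonzero one gives a sum of two squares (Brahmagupta–Fibonacci identity), and
`x ^ 2 + g ^ 2 = 0` forces `x = 0`.
-/

theorem exists_eq_sq_add_sq_of_mul_sq_add_sq {K : Type*} [Field K] {x a b c d : K}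
    (hcd : c ^ 2 + d ^ 2 ≠ 0) (h : x * (c ^ 2 + d ^ 2) = a ^ 2 + b ^ 2) :
    ∃ p q : K, x = p ^ 2 + q ^ 2 := by
  refine ⟨(a * c - b * d) / (c ^ 2 + d ^ 2), (a * d + b * c) / (c ^ 2 + d ^ 2), ?_⟩
  rw [div_pow, div_pow, ← add_div, ← sq_add_sq_mul_sq_add_sq, ← h, eq_div_iff (pow_ne_zero 2 hcd)]
  ring

theorem root_sum_two_squares (f g h x : ℚ)
    (hx : x ^ 3 - f ^ 2 * x ^ 2 + g ^ 2 * x - h ^ 2 = 0) :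
    ∃ p q : ℚ, x = p ^ 2 + q ^ 2 := by
  have key : x * (x ^ 2 + g ^ 2) = (f * x) ^ 2 + h ^ 2 := by linear_combination hx
  by_cases hd : x ^ 2 + g ^ 2 = 0
  · have hx0 : x = 0 := eq_zero_of_mul_self_add_mul_self_eq_zero (by simpa only [sq] using hd)
    exact ⟨0, 0, by simp [hx0]⟩
  · exact exists_eq_sq_add_sq_of_mul_sq_add_sq hd key
end

section
/- For a = t²(s² - t²)²(s² + t²), b = s²(s² - t²)²(s² + t²), c = 4s⁴t⁴, the three elementary symmetric functions a + b + c, ab + bc + ca, and abc are all perfect squares (squares of polynomials in s, t with integer coefficients). -/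
theorem parmsol1 (s t : ℤ) :
    let a := t ^ 2 * (s ^ 2 - t ^ 2) ^ 2 * (s ^ 2 + t ^ 2)
    let b := s ^ 2 * (s ^ 2 - t ^ 2) ^ 2 * (s ^ 2 + t ^ 2)
    let c := 4 * s ^ 4 * t ^ 4
    (∃ f : ℤ, a + b + c = f ^ 2) ∧ (∃ g : ℤ, a * b + b * c + c * a = g ^ 2) ∧
      (∃ k : ℤ, a * b * c = k ^ 2) := by
  -- `a + b = (s⁴ - t⁴)²`, so `a + b + c` is the Pythagorean square `(s⁴ - t⁴)² + (2s²t²)²`.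
  refine ⟨⟨s ^ 4 + t ^ 4, by ring⟩,
    ⟨s * t * (s ^ 2 + t ^ 2) ^ 2 * (s ^ 2 - t ^ 2), by ring⟩,
    ⟨2 * s ^ 3 * t ^ 3 * (s ^ 2 - t ^ 2) ^ 2 * (s ^ 2 + t ^ 2), by ring⟩⟩
end

section
/- For a = 4s⁴t²(s² + t²)(s⁶ - s⁴t² - 5s²t⁴ + t⁶)², b = (s⁴ - t⁴)²(s⁶ - s⁴t² - 5s²t⁴ + t⁶)², c = 4s²t⁴(s² + t²)(3s⁶ + s⁴t² + s²t⁴ - t⁶)², the three elementary symmetric functions a + b + c, ab + bc + ca, and abc are all perfect squares. -/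
/-!
With `p`, `q` the sextics in `a, b` and in `c`, we have `b = ((s⁴ - t⁴) p)²` and
`a c = (4 s³ t³ (s² + t²) p q)²`, so `a b c` is a square; the other two symmetric functions are
squares by polynomial identities.
-/

namespace SymmetricSquaresTriple

def p (s t : ℤ) : ℤ := s ^ 6 - s ^ 4 * t ^ 2 - 5 * s ^ 2 * t ^ 4 + t ^ 6

def q (s t : ℤ) : ℤ := 3 * s ^ 6 + s ^ 4 * t ^ 2 + s ^ 2 * t ^ 4 - t ^ 6

def a (s t : ℤ) : ℤ := 4 * s ^ 4 * t ^ 2 * (s ^ 2 + t ^ 2) * p s t ^ 2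

def b (s t : ℤ) : ℤ := (s ^ 4 - t ^ 4) ^ 2 * p s t ^ 2

def c (s t : ℤ) : ℤ := 4 * s ^ 2 * t ^ 4 * (s ^ 2 + t ^ 2) * q s t ^ 2

theorem a_add_b_add_c (s t : ℤ) :
    a s t + b s t + c s t =
      ((s ^ 2 + t ^ 2) * (s ^ 8 + 10 * s ^ 4 * t ^ 4 - 4 * s ^ 2 * t ^ 6 + t ^ 8)) ^ 2 := by
  unfold a b c p q
  ring

theorem a_mul_b_add_b_mul_c_add_c_mul_a (s t : ℤ) :
    a s t * b s t + b s t * c s t + c s t * a s t =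
      (2 * s * t * (s ^ 2 + t ^ 2) * p s t *
        (s ^ 10 + 3 * s ^ 8 * t ^ 2 + 8 * s ^ 6 * t ^ 4 - 4 * s ^ 4 * t ^ 6 - s ^ 2 * t ^ 8
          + t ^ 10)) ^ 2 := by
  unfold a b c p q
  ring

theorem a_mul_c (s t : ℤ) :
    a s t * c s t = (4 * s ^ 3 * t ^ 3 * (s ^ 2 + t ^ 2) * p s t * q s t) ^ 2 := by
  unfold a c
  ring

theorem a_mul_b_mul_c (s t : ℤ) :
    a s t * b s t * c s t =
      ((s ^ 4 - t ^ 4) * p s t * (4 * s ^ 3 * t ^ 3 * (s ^ 2 + t ^ 2) * p s t * q s t)) ^ 2 := by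
  rw [mul_right_comm, a_mul_c, b]
  ring

end SymmetricSquaresTriple

theorem parmsol3 (s t : ℤ) :
    let a := 4 * s ^ 4 * t ^ 2 * (s ^ 2 + t ^ 2) *
      (s ^ 6 - s ^ 4 * t ^ 2 - 5 * s ^ 2 * t ^ 4 + t ^ 6) ^ 2
    let b := (s ^ 4 - t ^ 4) ^ 2 *
      (s ^ 6 - s ^ 4 * t ^ 2 - 5 * s ^ 2 * t ^ 4 + t ^ 6) ^ 2
    let c := 4 * s ^ 2 * t ^ 4 * (s ^ 2 + t ^ 2) *
      (3 * s ^ 6 + s ^ 4 * t ^ 2 + s ^ 2 * t ^ 4 - t ^ 6) ^ 2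
    (∃ f : ℤ, a + b + c = f ^ 2) ∧ (∃ g : ℤ, a * b + b * c + c * a = g ^ 2) ∧
      (∃ k : ℤ, a * b * c = k ^ 2) :=
  ⟨⟨_, SymmetricSquaresTriple.a_add_b_add_c s t⟩,
    ⟨_, SymmetricSquaresTriple.a_mul_b_add_b_mul_c_add_c_mul_a s t⟩,
    ⟨_, SymmetricSquaresTriple.a_mul_b_mul_c s t⟩⟩
end

section
/- For a = t²(s² - t²)²(s² + t²)(3s⁶ + s⁴t² + s²t⁴ - t⁶)², b = 4s⁴t⁴(3s⁶ + s⁴t² + s²t⁴ - t⁶)², c = s²(s² - t²)²(s² + t²)(s⁶ - s⁴t² - 5s²t⁴ + t⁶)², the three elementary symmetric functions a + b + c, ab + bc + ca, and abc are all perfect squares. -/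
/-!
Write `P`, `Q` for the two sextics and `W = (s² - t²)² (s² + t²)`, so that `a = t² W P²`,
`b = (2 s² t² P)²` and `c = s² W Q²`. Then `a c · b` is visibly a square, and
`ab + bc + ca = (s t (s² - t²) P)² · (s² + t²) (4 s² t² (t² P² + s² Q²) + W Q²)`.
So everything reduces to two identities: `W (t² P² + s² Q²) + b` and the last factor above
are squares of explicit polynomials of degree 10.
-/

namespace SymmetricSquares

variable {R : Type*} [CommRing R]

def sexticP (s t : R) : R := 3 * s ^ 6 + s ^ 4 * t ^ 2 + s ^ 2 * t ^ 4 - t ^ 6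

def sexticQ (s t : R) : R := s ^ 6 - s ^ 4 * t ^ 2 - 5 * s ^ 2 * t ^ 4 + t ^ 6

theorem weighted_sum_add_sq_eq_sq (s t : R) :
    (s ^ 2 - t ^ 2) ^ 2 * (s ^ 2 + t ^ 2) * (t ^ 2 * sexticP s t ^ 2 + s ^ 2 * sexticQ s t ^ 2)
        + (2 * s ^ 2 * t ^ 2 * sexticP s t) ^ 2 =
      (s ^ 10 + 3 * s ^ 8 * t ^ 2 + 8 * s ^ 6 * t ^ 4 - 4 * s ^ 4 * t ^ 6 - s ^ 2 * t ^ 8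
        + t ^ 10) ^ 2 := by
  unfold sexticP sexticQ
  ring

theorem pairwise_cofactor_eq_sq (s t : R) :
    (s ^ 2 + t ^ 2) * (4 * s ^ 2 * t ^ 2 * (t ^ 2 * sexticP s t ^ 2 + s ^ 2 * sexticQ s t ^ 2)
        + (s ^ 2 - t ^ 2) ^ 2 * (s ^ 2 + t ^ 2) * sexticQ s t ^ 2) =
      (s ^ 10 + s ^ 8 * t ^ 2 + 10 * s ^ 6 * t ^ 4 + 6 * s ^ 4 * t ^ 6 - 3 * s ^ 2 * t ^ 8
        + t ^ 10) ^ 2 := by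
  unfold sexticP sexticQ
  ring

end SymmetricSquares

open SymmetricSquares in
theorem parmsol4 (s t : ℤ) :
    let a := t ^ 2 * (s ^ 2 - t ^ 2) ^ 2 * (s ^ 2 + t ^ 2) *
      (3 * s ^ 6 + s ^ 4 * t ^ 2 + s ^ 2 * t ^ 4 - t ^ 6) ^ 2
    let b := 4 * s ^ 4 * t ^ 4 *
      (3 * s ^ 6 + s ^ 4 * t ^ 2 + s ^ 2 * t ^ 4 - t ^ 6) ^ 2
    let c := s ^ 2 * (s ^ 2 - t ^ 2) ^ 2 * (s ^ 2 + t ^ 2) *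
      (s ^ 6 - s ^ 4 * t ^ 2 - 5 * s ^ 2 * t ^ 4 + t ^ 6) ^ 2
    (∃ f : ℤ, a + b + c = f ^ 2) ∧ (∃ g : ℤ, a * b + b * c + c * a = g ^ 2) ∧
      (∃ k : ℤ, a * b * c = k ^ 2) := by
  intro a b c
  simp only [a, b, c, ← sexticP.eq_1, ← sexticQ.eq_1]
  refine ⟨⟨s ^ 10 + 3 * s ^ 8 * t ^ 2 + 8 * s ^ 6 * t ^ 4 - 4 * s ^ 4 * t ^ 6 - s ^ 2 * t ^ 8 + t ^ 10,
      by linear_combination weighted_sum_add_sq_eq_sq s t⟩,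
    ⟨s * t * (s ^ 2 - t ^ 2) * sexticP s t *
      (s ^ 10 + s ^ 8 * t ^ 2 + 10 * s ^ 6 * t ^ 4 + 6 * s ^ 4 * t ^ 6 - 3 * s ^ 2 * t ^ 8 + t ^ 10),
      by linear_combination (s * t * (s ^ 2 - t ^ 2) * sexticP s t) ^ 2 * pairwise_cofactor_eq_sq s t⟩,
    ⟨2 * s ^ 3 * t ^ 3 * (s ^ 2 - t ^ 2) ^ 2 * (s ^ 2 + t ^ 2) * sexticP s t ^ 2 * sexticQ s t,
      by ring⟩⟩
end

section
/- With u = 2s³/(s² - t²) and v = -(s⁶ - s⁴t² - 5s²t⁴ + t⁶)/(s² - t²)², the equation v² = u⁴ - 4((s² + t²)/s)u³ + 2((s² + t²)(3s⁴ + 2s²t² - 2t⁴)/s⁴)u² - 4((s² + t²)²/s)u + (s² + t²)² holds. -/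
theorem fermat_sol1 (s t : ℚ) (hs : s ≠ 0) (hst : s ^ 2 ≠ t ^ 2) :
    let u := 2 * s ^ 3 / (s ^ 2 - t ^ 2)
    let v := -(s ^ 6 - s ^ 4 * t ^ 2 - 5 * s ^ 2 * t ^ 4 + t ^ 6) / (s ^ 2 - t ^ 2) ^ 2
    v ^ 2 = u ^ 4 + (-4 * (s ^ 2 + t ^ 2) / s) * u ^ 3 +
      (2 * (s ^ 2 + t ^ 2) * (3 * s ^ 4 + 2 * s ^ 2 * t ^ 2 - 2 * t ^ 4) / s ^ 4) * u ^ 2 +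
      (-4 * (s ^ 2 + t ^ 2) ^ 2 / s) * u + (s ^ 2 + t ^ 2) ^ 2 := by
  intro u v
  have h : s ^ 2 - t ^ 2 ≠ 0 := sub_ne_zero.mpr hst
  simp only [u, v]
  field_simp [u, v]
  ring
end

section
/- For a = (m⁴ - n⁴)²(m⁴ - 6m²n² + n⁴)², b = 4m²n²(m² + n²)²(m⁴ - 6m²n² + n⁴)², c = 64m⁴n⁴(m² - n²)⁴, each of a, b, c is a perfect square, and the three elementary symmetric functions a + b + c, ab + bc + ca, abc are all perfect squares. -/
/-!
Put `s = r² - q²` for a Pythagorean triple `p² = q² + r²`, and take `a = (p r s)²`, `b = (p q s)²`,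
`c = (2 q² r²)²`. Then `a + b = p⁴ s² = (r⁴ - q⁴)²`, so `a + b + c = (r⁴ + q⁴)²`; and since
`s² + 4 q² r² = p⁴`, also `ab + bc + ca = ab + c (a + b) = (p⁴ q r s)²`. The theorem is the case
`(p, q, r) = (m² + n², 2mn, m² - n²)`.
-/

def IsAllSquareTriple {R : Type*} [Mul R] [Add R] (a b c : R) : Prop :=
  IsSquare a ∧ IsSquare b ∧ IsSquare c ∧
    IsSquare (a + b + c) ∧ IsSquare (a * b + b * c + c * a) ∧ IsSquare (a * b * c)

section Pythagorean

variable {R : Type*} [CommRing R] {p q r : R}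

lemma add_add_eq_sq_of_pythagorean (h : p ^ 2 = q ^ 2 + r ^ 2) :
    (p * r * (r ^ 2 - q ^ 2)) ^ 2 + (p * q * (r ^ 2 - q ^ 2)) ^ 2 + (2 * q ^ 2 * r ^ 2) ^ 2 =
      (r ^ 4 + q ^ 4) ^ 2 := by
  linear_combination (r ^ 2 - q ^ 2) ^ 2 * (q ^ 2 + r ^ 2) * h

lemma mul_add_mul_add_mul_eq_sq_of_pythagorean (h : p ^ 2 = q ^ 2 + r ^ 2) :
    (p * r * (r ^ 2 - q ^ 2)) ^ 2 * (p * q * (r ^ 2 - q ^ 2)) ^ 2 +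
        (p * q * (r ^ 2 - q ^ 2)) ^ 2 * (2 * q ^ 2 * r ^ 2) ^ 2 +
        (2 * q ^ 2 * r ^ 2) ^ 2 * (p * r * (r ^ 2 - q ^ 2)) ^ 2 =
      (p ^ 4 * q * r * (r ^ 2 - q ^ 2)) ^ 2 := by
  linear_combination
    -(p * q * r * (r ^ 2 - q ^ 2)) ^ 2 * (p ^ 2 * (p ^ 2 + q ^ 2 + r ^ 2) + 4 * q ^ 2 * r ^ 2) * h

theorem isAllSquareTriple_of_pythagorean {a b c : R} (h : p ^ 2 = q ^ 2 + r ^ 2)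
    (ha : a = (p * r * (r ^ 2 - q ^ 2)) ^ 2) (hb : b = (p * q * (r ^ 2 - q ^ 2)) ^ 2)
    (hc : c = (2 * q ^ 2 * r ^ 2) ^ 2) : IsAllSquareTriple a b c := by
  subst ha hb hc
  exact ⟨.sq _, .sq _, .sq _, add_add_eq_sq_of_pythagorean h ▸ .sq _,
    mul_add_mul_add_mul_eq_sq_of_pythagorean h ▸ .sq _, ((IsSquare.sq _).mul (.sq _)).mul (.sq _)⟩

end Pythagorean

theorem allsquaresol1 (m n : ℤ) :
    let a := (m ^ 4 - n ^ 4) ^ 2 * (m ^ 4 - 6 * m ^ 2 * n ^ 2 + n ^ 4) ^ 2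
    let b := 4 * m ^ 2 * n ^ 2 * (m ^ 2 + n ^ 2) ^ 2 * (m ^ 4 - 6 * m ^ 2 * n ^ 2 + n ^ 4) ^ 2
    let c := 64 * m ^ 4 * n ^ 4 * (m ^ 2 - n ^ 2) ^ 4
    (∃ x : ℤ, a = x ^ 2) ∧ (∃ y : ℤ, b = y ^ 2) ∧ (∃ z : ℤ, c = z ^ 2) ∧
    (∃ f : ℤ, a + b + c = f ^ 2) ∧ (∃ g : ℤ, a * b + b * c + c * a = g ^ 2) ∧
      (∃ k : ℤ, a * b * c = k ^ 2) := by
  intro a b c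
  have key : IsAllSquareTriple a b c :=
    isAllSquareTriple_of_pythagorean (p := m ^ 2 + n ^ 2) (q := 2 * m * n) (r := m ^ 2 - n ^ 2)
      (by ring) (by ring) (by ring) (by ring)
  simpa only [IsAllSquareTriple, isSquare_iff_exists_sq] using key
end

section
/- For a = 64m⁴n⁴(m² - n²)², b = 16m²n²(m² - n²)⁴, c = (m² + n²)²(m⁴ - 6m²n² + n⁴)², each of a, b, c is a perfect square, and the three elementary symmetric functions a + b + c, ab + bc + ca, abc are all perfect squares. -/
/-!
With `p = 2mn`, `q = m² - n²`, `r = m² + n²` we have `p² + q² = r²`, and `a`, `b`, `c` are the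
squares of `x = 2p²q`, `y = 2pq²`, `z = r(q² - p²)`. Using `r² = p² + q²`, the sum
`x² + y² + z²` collapses to `r⁶`, while `x²y² + y²z² + z²x² = 4p²q²(4p⁴q⁴ + (q⁴ - p⁴)²)`, which is a
square by the Pythagorean identity `(q⁴ - p⁴)² + (2p²q²)² = (p⁴ + q⁴)²`. The product is `(xyz)²`.
-/

section PythagoreanSquares

variable {R : Type*} [CommRing R] {p q r : R}

theorem sq_add_sq_add_sq_eq_cube_sq_of_sq_add_sq (h : p ^ 2 + q ^ 2 = r ^ 2) :
    (2 * p ^ 2 * q) ^ 2 + (2 * p * q ^ 2) ^ 2 + (r * (q ^ 2 - p ^ 2)) ^ 2 = (r ^ 3) ^ 2 := by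
  linear_combination (r ^ 4 + r ^ 2 * (p ^ 2 + q ^ 2) + (p ^ 2 + q ^ 2) ^ 2 - (q ^ 2 - p ^ 2) ^ 2) * h

theorem sq_mul_sq_add_sq_mul_sq_add_sq_mul_sq_eq_sq_of_sq_add_sq (h : p ^ 2 + q ^ 2 = r ^ 2) :
    (2 * p ^ 2 * q) ^ 2 * (2 * p * q ^ 2) ^ 2 + (2 * p * q ^ 2) ^ 2 * (r * (q ^ 2 - p ^ 2)) ^ 2
      + (r * (q ^ 2 - p ^ 2)) ^ 2 * (2 * p ^ 2 * q) ^ 2 = (2 * p * q * (p ^ 4 + q ^ 4)) ^ 2 := by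
  linear_combination (-4 * p ^ 2 * q ^ 2 * (p ^ 2 + q ^ 2) * (q ^ 2 - p ^ 2) ^ 2) * h

end PythagoreanSquares

theorem allsquaresol2 (m n : ℤ) :
    let a := 64 * m ^ 4 * n ^ 4 * (m ^ 2 - n ^ 2) ^ 2
    let b := 16 * m ^ 2 * n ^ 2 * (m ^ 2 - n ^ 2) ^ 4
    let c := (m ^ 2 + n ^ 2) ^ 2 * (m ^ 4 - 6 * m ^ 2 * n ^ 2 + n ^ 4) ^ 2
    (∃ x : ℤ, a = x ^ 2) ∧ (∃ y : ℤ, b = y ^ 2) ∧ (∃ z : ℤ, c = z ^ 2) ∧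
    (∃ f : ℤ, a + b + c = f ^ 2) ∧ (∃ g : ℤ, a * b + b * c + c * a = g ^ 2) ∧
      (∃ k : ℤ, a * b * c = k ^ 2) := by
  intro a b c
  have euclid : (2 * m * n) ^ 2 + (m ^ 2 - n ^ 2) ^ 2 = (m ^ 2 + n ^ 2) ^ 2 := by ring
  have ha : a = (2 * (2 * m * n) ^ 2 * (m ^ 2 - n ^ 2)) ^ 2 := by ring
  have hb : b = (2 * (2 * m * n) * (m ^ 2 - n ^ 2) ^ 2) ^ 2 := by ring
  have hc : c = ((m ^ 2 + n ^ 2) * ((m ^ 2 - n ^ 2) ^ 2 - (2 * m * n) ^ 2)) ^ 2 := by ring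
  rw [ha, hb, hc]
  exact ⟨⟨_, rfl⟩, ⟨_, rfl⟩, ⟨_, rfl⟩,
    ⟨_, sq_add_sq_add_sq_eq_cube_sq_of_sq_add_sq euclid⟩,
    ⟨_, sq_mul_sq_add_sq_mul_sq_add_sq_mul_sq_eq_sq_of_sq_add_sq euclid⟩,
    ⟨_, by rw [← mul_pow, ← mul_pow]⟩⟩
end

section
/- For a = 64m⁴n⁴(m² - n²)²P², b = (m² + n²)²(m⁴ - 6m²n² + n⁴)²P², c = 16m²n²(m² - n²)⁴Q², where P = m¹² - 26m¹⁰n² + 79m⁸n⁴ - 44m⁶n⁶ + 79m⁴n⁸ - 26m²n¹⁰ + n¹² and Q = m¹² - 10m¹⁰n² + 15m⁸n⁴ - 204m⁶n⁶ + 15m⁴n⁸ - 10m²n¹⁰ + n¹², the three elementary symmetric functions a + b + c, ab + bc + ca, abc are all perfect squares. -/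
/-!
With `x = m²`, `y = n²` everything becomes a binary form in `x`, `y` of half the degree.
Write `a = P²α`, `b = P²β`, `c = γ`. Since `16xy(x - y)²` divides both `αβ` and `γ`,
`ab + bc + ca = P²(P²αβ + γ(α + β))` is `16xy(x - y)²P²` times the cofactor
`4xy(x + y)²(x² - 6xy + y²)²P² + (x - y)²Q²(α + β)`, which is the square `G²`; likewise
`abc = 16xy · (…)²`, and `16xy = (4mn)²`. Finally `a + b + c = ((x + y)F)²` directly.
-/

namespace AllSquareSol3

variable {R : Type*} [CommRing R] (x y : R)

def P : R :=
  x ^ 6 - 26 * x ^ 5 * y + 79 * x ^ 4 * y ^ 2 - 44 * x ^ 3 * y ^ 3 + 79 * x ^ 2 * y ^ 4 -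
    26 * x * y ^ 5 + y ^ 6

def Q : R :=
  x ^ 6 - 10 * x ^ 5 * y + 15 * x ^ 4 * y ^ 2 - 204 * x ^ 3 * y ^ 3 + 15 * x ^ 2 * y ^ 4 -
    10 * x * y ^ 5 + y ^ 6

def a : R := 64 * x ^ 2 * y ^ 2 * (x - y) ^ 2 * P x y ^ 2

def b : R := (x + y) ^ 2 * (x ^ 2 - 6 * x * y + y ^ 2) ^ 2 * P x y ^ 2

def c : R := 16 * x * y * (x - y) ^ 4 * Q x y ^ 2

def F : R :=
  x ^ 8 - 24 * x ^ 7 * y + 284 * x ^ 6 * y ^ 2 - 936 * x ^ 5 * y ^ 3 + 1606 * x ^ 4 * y ^ 4 -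
    936 * x ^ 3 * y ^ 5 + 284 * x ^ 2 * y ^ 6 - 24 * x * y ^ 7 + y ^ 8

def G : R :=
  x ^ 10 - 14 * x ^ 9 * y + 13 * x ^ 8 * y ^ 2 + 664 * x ^ 7 * y ^ 3 - 1806 * x ^ 6 * y ^ 4 +
    3308 * x ^ 5 * y ^ 5 - 1806 * x ^ 4 * y ^ 6 + 664 * x ^ 3 * y ^ 7 + 13 * x ^ 2 * y ^ 8 -
    14 * x * y ^ 9 + y ^ 10

theorem a_add_b_add_c : a x y + b x y + c x y = ((x + y) * F x y) ^ 2 := by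
  simp only [a, b, c, P, Q, F]
  ring

theorem cofactor_eq_sq :
    4 * x * y * (x + y) ^ 2 * (x ^ 2 - 6 * x * y + y ^ 2) ^ 2 * P x y ^ 2 +
      (x - y) ^ 2 * Q x y ^ 2 *
        (64 * x ^ 2 * y ^ 2 * (x - y) ^ 2 + (x + y) ^ 2 * (x ^ 2 - 6 * x * y + y ^ 2) ^ 2) =
      G x y ^ 2 := by
  simp only [P, Q, G]
  ring

theorem a_mul_b_mul_c :
    a x y * b x y * c x y =
      16 * x * y * (8 * x * y * (x - y) ^ 3 * (x + y) * (x ^ 2 - 6 * x * y + y ^ 2) *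
        P x y ^ 2 * Q x y) ^ 2 := by
  simp only [a, b, c]
  ring

theorem ab_add_bc_add_ca :
    a x y * b x y + b x y * c x y + c x y * a x y =
      16 * x * y * ((x - y) * P x y * G x y) ^ 2 := by
  simp only [a, b, c]
  linear_combination 16 * x * y * (x - y) ^ 2 * P x y ^ 2 * cofactor_eq_sq x y

theorem symmetric_functions_sq (m n : R) :
    (∃ f, a (m ^ 2) (n ^ 2) + b (m ^ 2) (n ^ 2) + c (m ^ 2) (n ^ 2) = f ^ 2) ∧
    (∃ g, a (m ^ 2) (n ^ 2) * b (m ^ 2) (n ^ 2) + b (m ^ 2) (n ^ 2) * c (m ^ 2) (n ^ 2) +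
      c (m ^ 2) (n ^ 2) * a (m ^ 2) (n ^ 2) = g ^ 2) ∧
    (∃ k, a (m ^ 2) (n ^ 2) * b (m ^ 2) (n ^ 2) * c (m ^ 2) (n ^ 2) = k ^ 2) := by
  refine ⟨⟨_, a_add_b_add_c _ _⟩,
    ⟨4 * m * n * ((m ^ 2 - n ^ 2) * P (m ^ 2) (n ^ 2) * G (m ^ 2) (n ^ 2)), ?_⟩,
    ⟨4 * m * n * (8 * m ^ 2 * n ^ 2 * (m ^ 2 - n ^ 2) ^ 3 * (m ^ 2 + n ^ 2) *
      (m ^ 4 - 6 * m ^ 2 * n ^ 2 + n ^ 4) * P (m ^ 2) (n ^ 2) ^ 2 * Q (m ^ 2) (n ^ 2)), ?_⟩⟩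
  · rw [ab_add_bc_add_ca]; ring
  · rw [a_mul_b_mul_c]; ring

end AllSquareSol3

theorem allsquaresol3 (m n : ℤ) :
    let P := m ^ 12 - 26 * m ^ 10 * n ^ 2 + 79 * m ^ 8 * n ^ 4 - 44 * m ^ 6 * n ^ 6 +
      79 * m ^ 4 * n ^ 8 - 26 * m ^ 2 * n ^ 10 + n ^ 12
    let Q := m ^ 12 - 10 * m ^ 10 * n ^ 2 + 15 * m ^ 8 * n ^ 4 - 204 * m ^ 6 * n ^ 6 +
      15 * m ^ 4 * n ^ 8 - 10 * m ^ 2 * n ^ 10 + n ^ 12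
    let a := 64 * m ^ 4 * n ^ 4 * (m ^ 2 - n ^ 2) ^ 2 * P ^ 2
    let b := (m ^ 2 + n ^ 2) ^ 2 * (m ^ 4 - 6 * m ^ 2 * n ^ 2 + n ^ 4) ^ 2 * P ^ 2
    let c := 16 * m ^ 2 * n ^ 2 * (m ^ 2 - n ^ 2) ^ 4 * Q ^ 2
    (∃ f : ℤ, a + b + c = f ^ 2) ∧ (∃ g : ℤ, a * b + b * c + c * a = g ^ 2) ∧
      (∃ k : ℤ, a * b * c = k ^ 2) := by
  intro P' Q' a' b' c'
  have hP : P' = AllSquareSol3.P (m ^ 2) (n ^ 2) := by simp only [P', AllSquareSol3.P]; ring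
  have ha : a' = AllSquareSol3.a (m ^ 2) (n ^ 2) := by simp only [a', AllSquareSol3.a, hP]; ring
  have hb : b' = AllSquareSol3.b (m ^ 2) (n ^ 2) := by simp only [b', AllSquareSol3.b, hP]; ring
  have hc : c' = AllSquareSol3.c (m ^ 2) (n ^ 2) := by
    simp only [c', AllSquareSol3.c, Q', AllSquareSol3.Q]; ring
  rw [ha, hb, hc]
  exact AllSquareSol3.symmetric_functions_sq m n
end

section
/- For a = r²(r² + s²)D²E, b = s²(r² + s²)C²D², c = 4r⁴s⁴C²E, where C = 5r⁶ + 3r⁴s² + 3r²s⁴ + s⁶, D = r⁸ + 2r⁶s² - 12r⁴s⁴ - 6r²s⁶ - s⁸, E = r¹² + 6r¹⁰s² + 87r⁸s⁴ + 108r⁶s⁶ + 55r⁴s⁸ + 14r²s¹⁰ + s¹², the three elementary symmetric functions a + b + c, ab + bc + ca, abc are all perfect squares. -/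
/-! All three claims reduce to polynomial identities in `r, s`. The product `abc` is a square
for any `C, D, E`. For `ab + bc + ca`, the common factor `r²s²(r²+s²)C²D²E` leaves
`(r²+s²)D² + 4r²s²(s²C² + r²E)`, which for these `C, D, E` collapses to `(r²+s²)³E`.
The sum `a + b + c` is the square of an explicit form `F` of degree 16. -/

namespace SymmetricSquares

variable {R : Type*} [CommRing R]

def C (r s : R) : R := 5 * r ^ 6 + 3 * r ^ 4 * s ^ 2 + 3 * r ^ 2 * s ^ 4 + s ^ 6

def D (r s : R) : R := r ^ 8 + 2 * r ^ 6 * s ^ 2 - 12 * r ^ 4 * s ^ 4 - 6 * r ^ 2 * s ^ 6 - s ^ 8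

def E (r s : R) : R :=
  r ^ 12 + 6 * r ^ 10 * s ^ 2 + 87 * r ^ 8 * s ^ 4 + 108 * r ^ 6 * s ^ 6 +
    55 * r ^ 4 * s ^ 8 + 14 * r ^ 2 * s ^ 10 + s ^ 12

def F (r s : R) : R :=
  r ^ 16 + 18 * r ^ 14 * s ^ 2 + 16 * r ^ 12 * s ^ 4 + 150 * r ^ 10 * s ^ 6 +
    222 * r ^ 8 * s ^ 8 + 142 * r ^ 6 * s ^ 10 + 48 * r ^ 4 * s ^ 12 + 10 * r ^ 2 * s ^ 14 + s ^ 16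

theorem add_D_sq_eq (r s : R) :
    (r ^ 2 + s ^ 2) * D r s ^ 2 + 4 * r ^ 2 * s ^ 2 * (s ^ 2 * C r s ^ 2 + r ^ 2 * E r s) =
      (r ^ 2 + s ^ 2) ^ 3 * E r s := by
  simp only [C, D, E]
  ring

theorem sum_eq_F_sq (r s : R) :
    r ^ 2 * (r ^ 2 + s ^ 2) * D r s ^ 2 * E r s + s ^ 2 * (r ^ 2 + s ^ 2) * C r s ^ 2 * D r s ^ 2 +
      4 * r ^ 4 * s ^ 4 * C r s ^ 2 * E r s = F r s ^ 2 := by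
  simp only [C, D, E, F]
  ring

section

variable (r s c d e : R)

theorem prod_eq_sq :
    r ^ 2 * (r ^ 2 + s ^ 2) * d ^ 2 * e * (s ^ 2 * (r ^ 2 + s ^ 2) * c ^ 2 * d ^ 2) *
      (4 * r ^ 4 * s ^ 4 * c ^ 2 * e) = (2 * r ^ 3 * s ^ 3 * (r ^ 2 + s ^ 2) * c ^ 2 * d ^ 2 * e) ^ 2 := by
  ring

theorem sum_mul_eq_sq
    (h : (r ^ 2 + s ^ 2) * d ^ 2 + 4 * r ^ 2 * s ^ 2 * (s ^ 2 * c ^ 2 + r ^ 2 * e) =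
      (r ^ 2 + s ^ 2) ^ 3 * e) :
    r ^ 2 * (r ^ 2 + s ^ 2) * d ^ 2 * e * (s ^ 2 * (r ^ 2 + s ^ 2) * c ^ 2 * d ^ 2) +
        s ^ 2 * (r ^ 2 + s ^ 2) * c ^ 2 * d ^ 2 * (4 * r ^ 4 * s ^ 4 * c ^ 2 * e) +
        4 * r ^ 4 * s ^ 4 * c ^ 2 * e * (r ^ 2 * (r ^ 2 + s ^ 2) * d ^ 2 * e) =
      (r * s * (r ^ 2 + s ^ 2) ^ 2 * c * d * e) ^ 2 := by
  linear_combination r ^ 2 * s ^ 2 * (r ^ 2 + s ^ 2) * c ^ 2 * d ^ 2 * e * h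

end

end SymmetricSquares

theorem gensol1 (r s : ℤ) :
    let C := 5 * r ^ 6 + 3 * r ^ 4 * s ^ 2 + 3 * r ^ 2 * s ^ 4 + s ^ 6
    let D := r ^ 8 + 2 * r ^ 6 * s ^ 2 - 12 * r ^ 4 * s ^ 4 - 6 * r ^ 2 * s ^ 6 - s ^ 8
    let E := r ^ 12 + 6 * r ^ 10 * s ^ 2 + 87 * r ^ 8 * s ^ 4 + 108 * r ^ 6 * s ^ 6 +
      55 * r ^ 4 * s ^ 8 + 14 * r ^ 2 * s ^ 10 + s ^ 12
    let a := r ^ 2 * (r ^ 2 + s ^ 2) * D ^ 2 * E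
    let b := s ^ 2 * (r ^ 2 + s ^ 2) * C ^ 2 * D ^ 2
    let c := 4 * r ^ 4 * s ^ 4 * C ^ 2 * E
    (∃ f : ℤ, a + b + c = f ^ 2) ∧ (∃ g : ℤ, a * b + b * c + c * a = g ^ 2) ∧
      (∃ k : ℤ, a * b * c = k ^ 2) := by
  intro C D E a b c
  exact ⟨⟨_, SymmetricSquares.sum_eq_F_sq r s⟩,
    ⟨_, SymmetricSquares.sum_mul_eq_sq r s C D E (SymmetricSquares.add_D_sq_eq r s)⟩,
    ⟨_, SymmetricSquares.prod_eq_sq r s C D E⟩⟩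
end

section
/- If positive integers a, b, c satisfy a + b + c = f², ab + bc + ca = g², and abc = h² for some integers f, g, h, then each of a, b, c is expressible as a sum of two squares of rational numbers. -/
lemma aux_sum2sq (a b c f g h : ℚ) (ha : 0 < a)
    (h1 : a + b + c = f ^ 2) (h2 : a * b + b * c + c * a = g ^ 2)
    (h3 : a * b * c = h ^ 2) : ∃ p q : ℚ, a = p ^ 2 + q ^ 2 := by
  have hD : (0:ℚ) < a ^ 2 + g ^ 2 := by positivity
  refine ⟨(a^2*f + g*h)/(a^2+g^2), (a*f*g - a*h)/(a^2+g^2), ?_⟩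
  rw [div_pow, div_pow, ← add_div, eq_div_iff (by positivity)]
  linear_combination (a^2*(a^2+g^2)) * h1 - (a*(a^2+g^2)) * h2 + (a^2+g^2) * h3

theorem each_sum_two_squares (a b c : ℤ) (ha : 0 < a) (hb : 0 < b) (hc : 0 < c)
    (f g h : ℤ) (h1 : a + b + c = f ^ 2) (h2 : a * b + b * c + c * a = g ^ 2)
    (h3 : a * b * c = h ^ 2) :
    (∃ p q : ℚ, (a : ℚ) = p ^ 2 + q ^ 2) ∧ (∃ p q : ℚ, (b : ℚ) = p ^ 2 + q ^ 2) ∧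
      (∃ p q : ℚ, (c : ℚ) = p ^ 2 + q ^ 2) := by
  have ha' : (0:ℚ) < a := by exact_mod_cast ha
  have hb' : (0:ℚ) < b := by exact_mod_cast hb
  have hc' : (0:ℚ) < c := by exact_mod_cast hc
  have h1' : (a:ℚ) + b + c = (f:ℚ) ^ 2 := by exact_mod_cast h1
  have h2' : (a:ℚ) * b + b * c + c * a = (g:ℚ) ^ 2 := by exact_mod_cast h2
  have h3' : (a:ℚ) * b * c = (h:ℚ) ^ 2 := by exact_mod_cast h3
  refine ⟨aux_sum2sq a b c f g h ha' h1' h2' h3', ?_, ?_⟩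
  · exact aux_sum2sq b c a f g h hb' (by linarith) (by linear_combination h2')
      (by linear_combination h3')
  · exact aux_sum2sq c a b f g h hc' (by linarith) (by linear_combination h2')
      (by linear_combination h3')
end

section
/- The point (X, Y) = (-12087/4, 7803/8) lies on the elliptic curve Y² = X³ - 27716256X - 56159127360 and is not a torsion point (has infinite order). -/
open WeierstrassCurve.Affine

namespace EPt

noncomputable def E : WeierstrassCurve.Affine ℚ := ⟨0, 0, 0, -27716256, -56159127360⟩

@[simp] lemma E_a1 : E.a₁ = 0 := rfl
@[simp] lemma E_a2 : E.a₂ = 0 := rfl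
@[simp] lemma E_a3 : E.a₃ = 0 := rfl
@[simp] lemma E_a4 : E.a₄ = -27716256 := rfl
@[simp] lemma E_a6 : E.a₆ = -56159127360 := rfl

lemma E_equation_iff (x y : ℚ) :
    E.Equation x y ↔ y ^ 2 = x ^ 3 + (-27716256) * x + (-56159127360) := by
  rw [WeierstrassCurve.Affine.equation_iff]
  simp

lemma E_negY (x y : ℚ) : E.negY x y = -y := by
  simp [WeierstrassCurve.Affine.negY]

lemma E_addX (x₁ x₂ L : ℚ) : E.addX x₁ x₂ L = L ^ 2 - x₁ - x₂ := by
  rw [WeierstrassCurve.Affine.addX, E_a1, E_a2]; ring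

lemma E_ns : E.Nonsingular (-12087 / 4) (7803 / 8) := by
  rw [WeierstrassCurve.Affine.nonsingular_iff, E_equation_iff]
  norm_num [WeierstrassCurve.Affine.equation_iff]

/-! ### valuation helpers -/

local notation "v" => padicValRat 2

lemma ne_zero_of_v {q : ℚ} {n : ℤ} (h : v q = n) (hn : n ≠ 0) : q ≠ 0 := by
  intro h0; rw [h0] at h; simp at h; omega

lemma v_int_nonneg (m : ℤ) : 0 ≤ v (m : ℚ) := by
  rw [padicValRat.of_int]; positivity

lemma v_mul {q r : ℚ} (hq : q ≠ 0) (hr : r ≠ 0) : v (q * r) = v q + v r :=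
  padicValRat.mul hq hr

lemma v_neg (q : ℚ) : v (-q) = v q := padicValRat.neg q

lemma v_add {q r : ℚ} (hq : q ≠ 0) (h : r = 0 ∨ (r ≠ 0 ∧ v q < v r)) :
    q + r ≠ 0 ∧ v (q + r) = v q := by
  rcases h with rfl | ⟨hr, hlt⟩
  · simpa using hq
  · have hne : q + r ≠ 0 := by
      intro h0
      have hq' : q = -r := by linarith
      rw [hq', v_neg] at hlt; exact lt_irrefl _ hlt
    exact ⟨hne, padicValRat.add_eq_of_lt (p := 2) hne hq hr hlt⟩

lemma v_sub {q r : ℚ} (hq : q ≠ 0) (h : r = 0 ∨ (r ≠ 0 ∧ v q < v r)) :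
    q - r ≠ 0 ∧ v (q - r) = v q := by
  rw [sub_eq_add_neg]
  refine v_add hq ?_
  rcases h with rfl | ⟨hr, hlt⟩
  · simp
  · exact Or.inr ⟨neg_ne_zero.mpr hr, by rwa [v_neg]⟩

lemma v_pow (q : ℚ) (hq : q ≠ 0) (n : ℕ) : v (q ^ n) = n * v q := by
  rw [padicValRat.pow (p := 2) q]

lemma v_div {q r : ℚ} (hq : q ≠ 0) (hr : r ≠ 0) : v (q / r) = v q - v r :=
  padicValRat.div hq hr

lemma v_two : v 2 = 1 := by
  simpa using padicValRat.self (p := 2) one_lt_two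

lemma v_odd_int (m : ℤ) (hm : ¬ (2 : ℤ) ∣ m) : v (m : ℚ) = 0 := by
  rw [padicValRat.of_int, padicValInt.eq_zero_of_not_dvd hm]
  simp

lemma vA : 0 ≤ v (-27716256 : ℚ) := by
  have h : ((-27716256 : ℤ) : ℚ) = -27716256 := by norm_num
  rw [← h]; exact v_int_nonneg _

lemma vB : 0 ≤ v (-56159127360 : ℚ) := by
  have h : ((-56159127360 : ℤ) : ℚ) = -56159127360 := by norm_num
  rw [← h]; exact v_int_nonneg _

lemma A_ne : (-27716256 : ℚ) ≠ 0 := by norm_num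
lemma B_ne : (-56159127360 : ℚ) ≠ 0 := by norm_num

/-- On the curve, `v x = -2k` (k ≥ 1) forces `y ≠ 0` and `v y = -3k`. -/
lemma vy {x y : ℚ} (hE : E.Equation x y) {k : ℤ} (hk : 1 ≤ k) (hx : v x = -(2 * k)) :
    y ≠ 0 ∧ v y = -(3 * k) := by
  have hx0 : x ≠ 0 := ne_zero_of_v hx (by omega)
  rw [E_equation_iff] at hE
  have e : y ^ 2 = x ^ 3 + ((-27716256) * x + (-56159127360)) := by linear_combination hE
  have vx3 : v (x ^ 3) = -(6 * k) := by
    rw [v_pow _ hx0, hx]; push_cast; ring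
  have hax : (-27716256 : ℚ) * x ≠ 0 := mul_ne_zero A_ne hx0
  have vax : v ((-27716256 : ℚ) * x) = v (-27716256 : ℚ) + -(2 * k) := by
    rw [v_mul A_ne hx0, hx]
  have hr : ((-27716256 : ℚ) * x + (-56159127360)) = 0 ∨
      (((-27716256 : ℚ) * x + (-56159127360)) ≠ 0 ∧
        v (x ^ 3) < v ((-27716256 : ℚ) * x + (-56159127360))) := by
    by_cases h0 : ((-27716256 : ℚ) * x + (-56159127360)) = 0
    · exact Or.inl h0
    · refine Or.inr ⟨h0, ?_⟩
      have hmin := padicValRat.min_le_padicValRat_add (p := 2)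
        (q := (-27716256 : ℚ) * x) (r := (-56159127360 : ℚ)) h0
      have h1 : -(6 * k) < v ((-27716256 : ℚ) * x) := by rw [vax]; linarith [vA]
      have h2 : -(6 * k) < v (-56159127360 : ℚ) := by linarith [vB]
      rw [vx3]
      calc -(6 * k) < min (v ((-27716256 : ℚ) * x)) (v (-56159127360 : ℚ)) := lt_min h1 h2
        _ ≤ _ := hmin
  have key := v_add (pow_ne_zero 3 hx0) hr
  rw [← e] at key
  have hy0 : y ≠ 0 := by
    intro h; rw [h] at key; simp at key
  refine ⟨hy0, ?_⟩
  have h2 : v (y ^ 2) = -(6 * k) := by rw [key.2, vx3]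
  rw [v_pow _ hy0] at h2
  push_cast at h2
  omega

/-- Doubling: slope is defined and x-coordinate valuation drops by 2. -/
lemma double_case {x y : ℚ} (hE : E.Equation x y) {k : ℤ} (hk : 1 ≤ k)
    (hx : v x = -(2 * k)) (hy : v y = -(3 * k)) :
    y ≠ E.negY x y ∧ v (E.addX x x (E.slope x x y y)) = -(2 * (k + 1)) := by
  have hx0 : x ≠ 0 := ne_zero_of_v hx (by omega)
  have hy0 : y ≠ 0 := ne_zero_of_v hy (by omega)
  have hyneg : y ≠ E.negY x y := by
    rw [E_negY]; intro h; exact hy0 (by linarith [h])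
  have hs : E.slope x x y y = (3 * x ^ 2 + (-27716256)) / (2 * y) := by
    rw [slope_of_Y_ne rfl hyneg, E_negY, E_a1, E_a2, E_a4]
    ring_nf
  -- numerator
  have h3 : (3 : ℚ) ≠ 0 := by norm_num
  have hx2 : x ^ 2 ≠ 0 := pow_ne_zero _ hx0
  have v3x2 : v (3 * x ^ 2) = -(4 * k) := by
    rw [v_mul h3 hx2, v_pow _ hx0, hx]
    have : v (3 : ℚ) = 0 := by
      have h : ((3 : ℤ) : ℚ) = 3 := by norm_num
      rw [← h]; exact v_odd_int 3 (by decide)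
    rw [this]; push_cast; ring
  have hnum := v_add (mul_ne_zero h3 hx2) (Or.inr ⟨A_ne, by rw [v3x2]; linarith [vA]⟩)
  -- denominator
  have h2y : (2 : ℚ) * y ≠ 0 := mul_ne_zero two_ne_zero hy0
  have v2y : v (2 * y) = 1 + -(3 * k) := by rw [v_mul two_ne_zero hy0, v_two, hy]
  have hL0 : (3 * x ^ 2 + (-27716256)) / (2 * y) ≠ 0 := div_ne_zero hnum.1 h2y
  have vL : v ((3 * x ^ 2 + (-27716256)) / (2 * y)) = -(k + 1) := by
    rw [v_div hnum.1 h2y, hnum.2, v3x2, v2y]; ring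
  have vL2 : v (((3 * x ^ 2 + (-27716256)) / (2 * y)) ^ 2) = -(2 * k + 2) := by
    rw [v_pow _ hL0, vL]; push_cast; ring
  have step1 := v_sub (pow_ne_zero 2 hL0) (Or.inr ⟨hx0, by rw [vL2, hx]; omega⟩)
  have step2 := v_sub step1.1 (Or.inr ⟨hx0, by rw [step1.2, vL2, hx]; omega⟩)
  refine ⟨hyneg, ?_⟩
  rw [hs, E_addX, step2.2, step1.2, vL2]; ring

lemma add_identity (A B x₁ y₁ x₂ y₂ : ℚ)
    (e₁ : y₁ ^ 2 = x₁ ^ 3 + A * x₁ + B) (e₂ : y₂ ^ 2 = x₂ ^ 3 + A * x₂ + B)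
    (hx : x₁ - x₂ ≠ 0) (hx₁ : x₁ ≠ 0) (hx₂ : x₂ ≠ 0) :
    ((y₁ - y₂) / (x₁ - x₂)) ^ 2 - x₁ - x₂
      = (((y₂ * x₁ - y₁ * x₂) / (x₁ - x₂)) ^ 2 - B) / (x₁ * x₂) := by
  field_simp
  linear_combination (x₂^2 - x₂^4 - x₁*x₂ + 3*x₁*x₂^3 - 3*x₁^2*x₂^2 + x₁^3*x₂ + x₁*x₂ - x₂^2) * e₁ +
    (-(x₁*x₂) + x₁*x₂^3 + x₁^2 - 3*x₁^2*x₂^2 + 3*x₁^3*x₂ - x₁^4 + x₁*x₂ - x₁^2) * e₂ +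
    (x₁*x₂ - 3*x₁*x₂^3 + 3*x₁^2*x₂^2 - x₁^3*x₂ - x₂^2 + x₂^4) * e₁ +
    (x₁*x₂ - x₁*x₂^3 + 3*x₁^2*x₂^2 - x₁^2 - 3*x₁^3*x₂ + x₁^4) * e₂

/-- Addition of points with distinct x-valuations. -/
lemma add_case {x₁ y₁ x₂ y₂ : ℚ} (e₁ : E.Equation x₁ y₁) (e₂ : E.Equation x₂ y₂)
    {k₁ k₂ : ℤ} (hk2 : 1 ≤ k₂) (hlt : k₂ < k₁)
    (hx₁ : v x₁ = -(2 * k₁)) (hy₁ : v y₁ = -(3 * k₁))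
    (hx₂ : v x₂ = -(2 * k₂)) (hy₂ : v y₂ = -(3 * k₂)) :
    x₁ ≠ x₂ ∧ v (E.addX x₁ x₂ (E.slope x₁ x₂ y₁ y₂)) = -(2 * k₂) := by
  have hx10 : x₁ ≠ 0 := ne_zero_of_v hx₁ (by omega)
  have hx20 : x₂ ≠ 0 := ne_zero_of_v hx₂ (by omega)
  have hy10 : y₁ ≠ 0 := ne_zero_of_v hy₁ (by omega)
  have hy20 : y₂ ≠ 0 := ne_zero_of_v hy₂ (by omega)
  have hne : x₁ ≠ x₂ := by
    intro h; rw [h, hx₂] at hx₁; omega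
  have hsub : x₁ - x₂ ≠ 0 := sub_ne_zero_of_ne hne
  have vsub : v (x₁ - x₂) = -(2 * k₁) := by
    rw [(v_sub hx10 (Or.inr ⟨hx20, by rw [hx₁, hx₂]; omega⟩)).2, hx₁]
  -- numerator of ν : y₂ * x₁ - y₁ * x₂ = -(y₁ * x₂ - y₂ * x₁)
  have hy1x2 : y₁ * x₂ ≠ 0 := mul_ne_zero hy10 hx20
  have hy2x1 : y₂ * x₁ ≠ 0 := mul_ne_zero hy20 hx10
  have v12 : v (y₁ * x₂) = -(3 * k₁ + 2 * k₂) := by rw [v_mul hy10 hx20, hy₁, hx₂]; ring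
  have v21 : v (y₂ * x₁) = -(3 * k₂ + 2 * k₁) := by rw [v_mul hy20 hx10, hy₂, hx₁]; ring
  have hnum := v_sub hy1x2 (Or.inr ⟨hy2x1, by rw [v12, v21]; omega⟩)
  have hnum' : y₂ * x₁ - y₁ * x₂ ≠ 0 ∧ v (y₂ * x₁ - y₁ * x₂) = -(3 * k₁ + 2 * k₂) := by
    have h : y₂ * x₁ - y₁ * x₂ = -(y₁ * x₂ - y₂ * x₁) := by ring
    rw [h, neg_ne_zero, v_neg, hnum.2, v12]
    exact ⟨hnum.1, rfl⟩
  -- ν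
  have hν0 : (y₂ * x₁ - y₁ * x₂) / (x₁ - x₂) ≠ 0 := div_ne_zero hnum'.1 hsub
  have vν : v ((y₂ * x₁ - y₁ * x₂) / (x₁ - x₂)) = -(k₁ + 2 * k₂) := by
    rw [v_div hnum'.1 hsub, hnum'.2, vsub]; ring
  have vν2 : v (((y₂ * x₁ - y₁ * x₂) / (x₁ - x₂)) ^ 2) = -(2 * k₁ + 4 * k₂) := by
    rw [v_pow _ hν0, vν]; push_cast; ring
  have htop := v_sub (pow_ne_zero 2 hν0) (Or.inr ⟨B_ne, by rw [vν2]; linarith [vB]⟩)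
  have hx1x2 : x₁ * x₂ ≠ 0 := mul_ne_zero hx10 hx20
  -- final
  refine ⟨hne, ?_⟩
  rw [slope_of_X_ne hne, E_addX]
  have heq := add_identity (-27716256) (-56159127360) x₁ y₁ x₂ y₂
    ((E_equation_iff x₁ y₁).mp e₁) ((E_equation_iff x₂ y₂).mp e₂) hsub hx10 hx20
  rw [heq, v_div htop.1 hx1x2, htop.2, vν2, v_mul hx10 hx20, hx₁, hx₂]
  ring

/-! ### base point valuations -/

lemma vbx : v (-12087 / 4 : ℚ) = -(2 * 1) := by
  have h1 : (-12087 / 4 : ℚ) = ((-12087 : ℤ) : ℚ) / ((2 : ℚ) ^ 2) := by norm_num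
  rw [h1, v_div (by norm_num) (by norm_num), v_pow _ two_ne_zero, v_two,
    v_odd_int _ (by decide)]
  norm_num

lemma vby : v (7803 / 8 : ℚ) = -(3 * 1) := by
  have h1 : (7803 / 8 : ℚ) = ((7803 : ℤ) : ℚ) / ((2 : ℚ) ^ 3) := by norm_num
  rw [h1, v_div (by norm_num) (by norm_num), v_pow _ two_ne_zero, v_two,
    v_odd_int _ (by decide)]
  norm_num

/-! ### main induction -/

open WeierstrassCurve.Affine.Point in
lemma main (P : E.Point) (hP : P = Point.some _ _ E_ns) :
    ∀ n : ℕ, 1 ≤ n → ∃ (x y : ℚ) (h : E.Nonsingular x y) (k : ℤ),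
      1 ≤ k ∧ (n % 2 = 0 → 2 ≤ k) ∧
      n • P = Point.some _ _ h ∧ v x = -(2 * k) ∧ v y = -(3 * k) := by
  intro n
  induction n using Nat.strong_induction_on with
  | _ n ih =>
    intro hn
    rcases eq_or_lt_of_le hn with h1 | h2
    · -- n = 1
      refine ⟨-12087 / 4, 7803 / 8, E_ns, 1, le_refl 1, by omega, ?_, vbx, vby⟩
      rw [← h1, one_nsmul, hP]
    · -- n ≥ 2
      rcases Nat.even_or_odd n with ⟨m, hm⟩ | ⟨m, hm⟩
      · -- n = m + m, m ≥ 1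
        have hm1 : 1 ≤ m := by omega
        obtain ⟨x, y, h, k, hk1, _, hsm, hvx, hvy⟩ := ih m (by omega) hm1
        have hd := double_case h.1 hk1 hvx hvy
        have hadd : n • P = Point.some _ _ (nonsingular_add h h fun hh => hd.1 hh.2) := by
          rw [hm, add_nsmul, hsm, add_some (fun hh => hd.1 hh.2)]
        have hvy' := vy (nonsingular_add h h fun hh => hd.1 hh.2).1 (k := k + 1) (by omega) hd.2
        exact ⟨_, _, nonsingular_add h h fun hh => hd.1 hh.2, k + 1, by omega, fun _ => by omega,
          hadd, hd.2, hvy'.2⟩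
      · -- n = 2 * m + 1, m ≥ 1
        have hm1 : 1 ≤ m := by omega
        obtain ⟨x₁, y₁, h₁, k₁, hk1, hpar, hsm, hvx₁, hvy₁⟩ := ih (2 * m) (by omega) (by omega)
        have hk₁2 : 2 ≤ k₁ := hpar (by omega)
        have ha := add_case h₁.1 E_ns.1 (k₁ := k₁) (k₂ := 1) le_rfl (by omega)
          hvx₁ hvy₁ vbx vby
        have hadd : n • P = Point.some _ _ (nonsingular_add h₁ E_ns fun hh => ha.1 hh.1) := by
          rw [hm, add_nsmul, hsm, one_nsmul, hP, add_some (fun hh => ha.1 hh.1)]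
        have hvy' := vy (nonsingular_add h₁ E_ns fun hh => ha.1 hh.1).1
          (k := 1) le_rfl ha.2
        exact ⟨_, _, nonsingular_add h₁ E_ns fun hh => ha.1 hh.1, 1, le_rfl,
          fun hc => by omega, hadd, ha.2, hvy'.2⟩

end EPt

theorem point_infinite_order :
    let W : WeierstrassCurve.Affine ℚ := ⟨0, 0, 0, -27716256, -56159127360⟩
    ∃ h : W.Nonsingular (-12087 / 4) (7803 / 8),
      addOrderOf (WeierstrassCurve.Affine.Point.some _ _ h) = 0 := by
  intro W
  refine ⟨EPt.E_ns, ?_⟩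
  rw [addOrderOf_eq_zero_iff]
  intro hfin
  obtain ⟨n, hpos, hn⟩ := isOfFinAddOrder_iff_nsmul_eq_zero.mp hfin
  obtain ⟨x, y, h, k, _, _, heq, _, _⟩ := EPt.main _ rfl n (by omega)
  replace heq := hn.symm.trans heq
  exact WeierstrassCurve.Affine.Point.some_ne_zero h heq.symm
end

section
/- With t = r(r⁶ - 9r⁴s² - 9r²s⁴ - 3s⁶)/(5r⁶ + 3r⁴s² + 3r²s⁴ + s⁶) and x = s²(r² + s²)/r², the quantity ψ(s, t, x) = x(s² - x)t⁴ + 2s⁴t²x + s²(s⁴ + s²x + x²)x is the square of a rational number. -/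
/-!
Substituting `x = s²(r² + s²)/r²` gives `s² - x = -s⁴/r²`, and with `m = r² + s²` one finds
`ψ(s, t, x) = (s³/r³)² · (m⁴ - m r² (t² - r²)²)`. The quartic `W² = m⁴ - m r² (t² - r²)²` has the
rational point `(t, W) = (r, m²)`, and the given `t` is another rational point on it: writing
`p = 4r⁶`, `q = m³`, it is `t = r(p - 3q)/(p + q)`, for which `t² - r² = -8r²q(p - q)/(p + q)²`,
and the quartic becomes a square by `(p + q)⁴ - 16pq(p - q)² = (p² - 6pq + q²)²`.
-/

variable {K : Type*} [Field K]

def psi (s t x : K) : K :=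
  x * (s ^ 2 - x) * t ^ 4 + 2 * s ^ 4 * t ^ 2 * x + s ^ 2 * (s ^ 4 + s ^ 2 * x + x ^ 2) * x

theorem psi_eq_sq_mul_quartic {r : K} (hr : r ≠ 0) (s t : K) :
    psi s t (s ^ 2 * (r ^ 2 + s ^ 2) / r ^ 2) =
      (s ^ 3 / r ^ 3) ^ 2 * ((r ^ 2 + s ^ 2) ^ 4 - (r ^ 2 + s ^ 2) * r ^ 2 * (t ^ 2 - r ^ 2) ^ 2) := by
  unfold psi
  field_simp
  ring

theorem add_pow_four_sub_sixteen_mul_mul_sub_sq {R : Type*} [CommRing R] (p q : R) :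
    (p + q) ^ 4 - 16 * p * q * (p - q) ^ 2 = (p ^ 2 - 6 * p * q + q ^ 2) ^ 2 := by
  ring

theorem quartic_eq_sq (a m : K) {p q : K} (hp : p = 4 * a ^ 6) (hq : q = m ^ 3) (h : p + q ≠ 0) :
    m ^ 4 - m * a ^ 2 * ((a * (p - 3 * q) / (p + q)) ^ 2 - a ^ 2) ^ 2 =
      (m ^ 2 * (p ^ 2 - 6 * p * q + q ^ 2) / (p + q) ^ 2) ^ 2 := by
  have ht : (a * (p - 3 * q) / (p + q)) ^ 2 - a ^ 2 = -8 * a ^ 2 * q * (p - q) / (p + q) ^ 2 := by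
    field_simp
    ring
  calc _ = m ^ 4 * ((p + q) ^ 4 - 16 * p * q * (p - q) ^ 2) / (p + q) ^ 4 := by
        rw [ht]
        field_simp
        rw [hp, hq]
        ring
    _ = _ := by
        rw [add_pow_four_sub_sixteen_mul_mul_sub_sq]
        field_simp

theorem psi_square (r s : ℚ) (hr : r ≠ 0)
    (hC : 5 * r ^ 6 + 3 * r ^ 4 * s ^ 2 + 3 * r ^ 2 * s ^ 4 + s ^ 6 ≠ 0) :
    let t := r * (r ^ 6 - 9 * r ^ 4 * s ^ 2 - 9 * r ^ 2 * s ^ 4 - 3 * s ^ 6) /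
      (5 * r ^ 6 + 3 * r ^ 4 * s ^ 2 + 3 * r ^ 2 * s ^ 4 + s ^ 6)
    let x := s ^ 2 * (r ^ 2 + s ^ 2) / r ^ 2
    ∃ w : ℚ, x * (s ^ 2 - x) * t ^ 4 + 2 * s ^ 4 * t ^ 2 * x +
      s ^ 2 * (s ^ 4 + s ^ 2 * x + x ^ 2) * x = w ^ 2 := by
  intro t x
  set m := r ^ 2 + s ^ 2
  have hC' : 4 * r ^ 6 + m ^ 3 ≠ 0 := by
    convert hC using 1
    ring
  have ht : t = r * (4 * r ^ 6 - 3 * m ^ 3) / (4 * r ^ 6 + m ^ 3) := by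
    simp only [t, m]
    ring
  obtain ⟨W, hW⟩ : ∃ W, m ^ 4 - m * r ^ 2 * (t ^ 2 - r ^ 2) ^ 2 = W ^ 2 :=
    ⟨_, ht ▸ quartic_eq_sq r m rfl rfl hC'⟩
  refine ⟨s ^ 3 / r ^ 3 * W, ?_⟩
  change psi s t x = _
  rw [psi_eq_sq_mul_quartic hr, hW, mul_pow]
end
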